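/- Let q be a prime power and let k, n, d be positive integers with d ≤ k and 2k ≤ n. For each j = 0, …, ⌊(n−k)/d⌋, let C_j ⊆ F_q^{k×(n−k−jd)} be an MRD code with minimum rank distance d when n − jd − k ≥ d, and a single matrix otherwise; let 𝒞_j = { row space of [0_{k×jd} | I_k | M] : M ∈ C_j }, and 𝒞 = ⋃_{j=0}^{⌊(n−k)/d⌋} 𝒞_j. Then the cardinality of 𝒞 equals N = Σ_{i=0}^{⌊(n−2k)/d⌋} q^{(k−d+1)(n−k−di)} + Σ_{i=⌊(n−2k)/d⌋+1}^{⌊(n−k)/d⌋} ⌈q^{k(n−k+1−d(i+1))}⌉, where ⌈q^e⌉ = 1 when the exponent e is nonpositive. -/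

import Mathlib

open Matrix Module

/-- The row space of a matrix, i.e. the span of its rows. -/
noncomputable def rowSpace (F : Type) [Field F] {k n : ℕ}
    (M : Matrix (Fin k) (Fin n) F) : Submodule F (Fin n → F) :=
  Submodule.span F (Set.range M)

/-- The block matrix `[0_{k×l} | I_k | M]` of size `k × n`,
where `M` has size `k × (n - k - l)`. -/
def paddedLift (F : Type) [Field F] (k n l : ℕ)
    (M : Matrix (Fin k) (Fin (n - k - l)) F) : Matrix (Fin k) (Fin n) F :=
  fun i j =>
    if (j : ℕ) < l then 0
    else if h : (j : ℕ) < l + k then (if (j : ℕ) = l + (i : ℕ) then 1 else 0)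
    else M i ⟨(j : ℕ) - (l + k), by have := j.isLt; omega⟩

/-- A rank-metric code `C` has minimum rank distance `d`. -/
def HasMinRankDist (F : Type) [Field F] {m n : ℕ}
    (C : Set (Matrix (Fin m) (Fin n) F)) (d : ℕ) : Prop :=
  (∀ A ∈ C, ∀ B ∈ C, A ≠ B → d ≤ (A - B).rank) ∧
  ∃ A ∈ C, ∃ B ∈ C, A ≠ B ∧ (A - B).rank = d

/-- A rank-metric code is MRD if it has minimum rank distance `d` and attains
the Singleton-like bound. -/
def IsMRD (F : Type) [Field F] [Fintype F] {m n : ℕ}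
    (C : Set (Matrix (Fin m) (Fin n) F)) (d : ℕ) : Prop :=
  HasMinRankDist F C d ∧
  Nat.card C = (Fintype.card F) ^ (max n m * (min n m - d + 1))

/-- A constant dimension code `𝒞` of dimension `k` has minimum injection distance `d`. -/
def HasMinInjDist (F : Type) [Field F] {n : ℕ} (k : ℕ)
    (𝒞 : Set (Submodule F (Fin n → F))) (d : ℕ) : Prop :=
  (∀ U ∈ 𝒞, ∀ V ∈ 𝒞, U ≠ V → d ≤ k - finrank F ↥(U ⊓ V)) ∧
  ∃ U ∈ 𝒞, ∃ V ∈ 𝒞, U ≠ V ∧ k - finrank F ↥(U ⊓ V) = d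

/-!
A vector of the lifted subspace `rowSpace [0 | I_k | M]` (offset `l`) vanishes on the first `l`
coordinates and is the combination of the rows whose coefficients are its own coordinates in the
identity block. Hence `M` can be read off from its lift, and lifts with different offsets never
coincide: the first row of the lift with the smaller offset has a `1` where every vector of the
other one vanishes. So the union has `∑ j |C_j|` elements, and the Singleton bound gives
`|C_j| = q^{(k-d+1)m}` when `C_j` has `m ≥ k` columns, and `q^{k(m-d+1)}` or `1` when `m < k`,
which is the ceiling in the second sum.
-/

section paddedLift

variable {F : Type} [Field F] {k n l : ℕ}

lemma paddedLift_apply_of_lt (M : Matrix (Fin k) (Fin (n - k - l)) F) (i : Fin k) {j : Fin n}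
    (hj : (j : ℕ) < l) : paddedLift F k n l M i j = 0 := by
  simp [paddedLift, hj]

lemma paddedLift_apply_natAdd (hln : l + k ≤ n) (M : Matrix (Fin k) (Fin (n - k - l)) F)
    (i s : Fin k) :
    paddedLift F k n l M i (Fin.castLE hln (Fin.natAdd l s)) = if i = s then 1 else 0 := by
  simp [paddedLift, Fin.ext_iff, eq_comm]

lemma paddedLift_apply_natAdd_natAdd (hln : l + k ≤ n) (M : Matrix (Fin k) (Fin (n - k - l)) F)
    (i : Fin k) (r : Fin (n - k - l)) :
    paddedLift F k n l M i (Fin.castLE (by omega) (Fin.natAdd (l + k) r)) = M i r := by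
  simp [paddedLift, show ¬ l + k + (r : ℕ) < l by omega]

lemma apply_eq_zero_of_mem_rowSpace_paddedLift {M : Matrix (Fin k) (Fin (n - k - l)) F}
    {v : Fin n → F} (hv : v ∈ rowSpace F (paddedLift F k n l M)) {j : Fin n}
    (hj : (j : ℕ) < l) : v j = 0 := by
  have hle : rowSpace F (paddedLift F k n l M) ≤ LinearMap.ker (LinearMap.proj j) :=
    Submodule.span_le.2 <| Set.range_subset_iff.2 fun i => paddedLift_apply_of_lt M i hj
  exact hle hv

lemma apply_natAdd_natAdd_of_mem_rowSpace_paddedLift (hln : l + k ≤ n)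
    {M : Matrix (Fin k) (Fin (n - k - l)) F} {v : Fin n → F}
    (hv : v ∈ rowSpace F (paddedLift F k n l M)) (r : Fin (n - k - l)) :
    v (Fin.castLE (by omega) (Fin.natAdd (l + k) r)) =
      ∑ s, v (Fin.castLE hln (Fin.natAdd l s)) * M s r := by
  let relation : (Fin n → F) →ₗ[F] F :=
    LinearMap.proj (Fin.castLE (by omega) (Fin.natAdd (l + k) r)) -
      ∑ s, M s r • LinearMap.proj (Fin.castLE hln (Fin.natAdd l s))
  have hle : rowSpace F (paddedLift F k n l M) ≤ LinearMap.ker relation := by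
    refine Submodule.span_le.2 <| Set.range_subset_iff.2 fun i => ?_
    simp [relation, paddedLift_apply_natAdd, paddedLift_apply_natAdd_natAdd hln]
  simpa [relation, sub_eq_zero, mul_comm] using hle hv

lemma rowSpace_paddedLift_injective (hln : l + k ≤ n) :
    Function.Injective fun M : Matrix (Fin k) (Fin (n - k - l)) F =>
      rowSpace F (paddedLift F k n l M) := by
  intro M M' (h : rowSpace F _ = rowSpace F _)
  ext i r
  have hrow : paddedLift F k n l M i ∈ rowSpace F (paddedLift F k n l M') :=
    h ▸ Submodule.subset_span ⟨i, rfl⟩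
  simpa [paddedLift_apply_natAdd, paddedLift_apply_natAdd_natAdd hln] using
    apply_natAdd_natAdd_of_mem_rowSpace_paddedLift hln hrow r

lemma rowSpace_paddedLift_ne_of_lt {l' : ℕ} (hk : 0 < k) (hln : l + k ≤ n) (hll' : l < l')
    (M : Matrix (Fin k) (Fin (n - k - l)) F) (M' : Matrix (Fin k) (Fin (n - k - l')) F) :
    rowSpace F (paddedLift F k n l M) ≠ rowSpace F (paddedLift F k n l' M') := by
  intro h
  have hrow : paddedLift F k n l M ⟨0, hk⟩ ∈ rowSpace F (paddedLift F k n l' M') :=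
    h ▸ Submodule.subset_span ⟨_, rfl⟩
  have hzero := apply_eq_zero_of_mem_rowSpace_paddedLift hrow
    (j := Fin.castLE hln (Fin.natAdd l ⟨0, hk⟩)) (by simpa using hll')
  rw [paddedLift_apply_natAdd, if_pos rfl] at hzero
  exact one_ne_zero hzero

end paddedLift

/-- The component `𝒞_j` of the construction is `liftedCode F k n (j * d) (C j)`. -/
def liftedCode (F : Type) [Field F] (k n l : ℕ)
    (C : Set (Matrix (Fin k) (Fin (n - k - l)) F)) : Set (Submodule F (Fin n → F)) :=
  (fun M => rowSpace F (paddedLift F k n l M)) '' C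

section liftedCode

variable {F : Type} [Field F] {k n l : ℕ}

lemma ncard_liftedCode (hln : l + k ≤ n) (C : Set (Matrix (Fin k) (Fin (n - k - l)) F)) :
    (liftedCode F k n l C).ncard = C.ncard :=
  Set.ncard_image_of_injective C (rowSpace_paddedLift_injective hln)

lemma disjoint_liftedCode_of_lt {l' : ℕ} (hk : 0 < k) (hln : l + k ≤ n) (hll' : l < l')
    (C : Set (Matrix (Fin k) (Fin (n - k - l)) F))
    (C' : Set (Matrix (Fin k) (Fin (n - k - l')) F)) :
    Disjoint (liftedCode F k n l C) (liftedCode F k n l' C') := by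
  refine Set.disjoint_left.2 ?_
  rintro _ ⟨M, -, rfl⟩ ⟨M', -, h⟩
  exact rowSpace_paddedLift_ne_of_lt hk hln hll' M M' h.symm

lemma natCard_setOf_rowSpace_paddedLift [Finite F] (hk : 0 < k) {o : ℕ → ℕ}
    (ho : StrictMono o) {J : ℕ} (hoJ : ∀ j ≤ J, o j + k ≤ n)
    (C : ∀ j, Set (Matrix (Fin k) (Fin (n - k - o j)) F)) :
    Nat.card {U : Submodule F (Fin n → F) | ∃ j ≤ J, ∃ M ∈ C j,
      U = rowSpace F (paddedLift F k n (o j) M)} = ∑ j ∈ Finset.range (J + 1), (C j).ncard := by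
  have hunion : {U : Submodule F (Fin n → F) | ∃ j ≤ J, ∃ M ∈ C j,
      U = rowSpace F (paddedLift F k n (o j) M)} =
      ⋃ j ∈ (Finset.range (J + 1) : Set ℕ), liftedCode F k n (o j) (C j) := by
    ext U
    simp [liftedCode, eq_comm]
  have hdisj : (Finset.range (J + 1) : Set ℕ).PairwiseDisjoint
      fun j => liftedCode F k n (o j) (C j) := by
    intro i hi j hj hij
    simp only [Finset.coe_range, Set.mem_Iio, Nat.lt_succ_iff] at hi hj
    rcases hij.lt_or_gt with h | h
    · exact disjoint_liftedCode_of_lt hk (hoJ i hi) (ho h) _ _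
    · exact (disjoint_liftedCode_of_lt hk (hoJ j hj) (ho h) _ _).symm
  rw [hunion, Nat.card_coe_set_eq,
    (Finset.finite_toSet _).ncard_biUnion (fun _ _ => Set.toFinite _) hdisj,
    finsum_mem_coe_finset]
  exact Finset.sum_congr rfl fun j hj =>
    ncard_liftedCode (hoJ j (Finset.mem_range_succ_iff.mp hj)) _

end liftedCode

lemma Int.ceil_natCast_zpow {K : Type*} [Field K] [LinearOrder K] [IsStrictOrderedRing K]
    [FloorRing K] {q : ℕ} (hq : 1 ≤ q) (e : ℤ) : ⌈(q : K) ^ e⌉ = (q : ℤ) ^ e.toNat := by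
  rcases le_or_gt 0 e with he | he
  · lift e to ℕ using he
    rw [zpow_natCast, ← Nat.cast_pow, Int.ceil_natCast, Int.toNat_natCast, Nat.cast_pow]
  · rw [Int.toNat_of_nonpos he.le, pow_zero, Int.ceil_eq_iff]
    refine ⟨by norm_num; positivity, ?_⟩
    norm_num
    exact zpow_le_one_of_nonpos₀ (by exact_mod_cast hq) he.le

section cardinality

variable {F : Type} [Field F] [Fintype F] {k m d : ℕ} {C : Set (Matrix (Fin k) (Fin m) F)}

lemma IsMRD.ncard_eq_of_le (hC : IsMRD F C d) (hkm : k ≤ m) :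
    C.ncard = Fintype.card F ^ ((k - d + 1) * m) := by
  rw [← Nat.card_coe_set_eq, hC.2, max_eq_left hkm, min_eq_right hkm, mul_comm]

lemma cast_ncard_eq_ceil_of_lt (hmk : m < k)
    (hC : if d ≤ m then IsMRD F C d else ∃ M, C = {M}) :
    (C.ncard : ℤ) = ⌈(Fintype.card F : ℚ) ^ ((k : ℤ) * (m + 1 - d))⌉ := by
  rw [Int.ceil_natCast_zpow Fintype.card_pos]
  split_ifs at hC with hdm
  · have he : (k : ℤ) * (m + 1 - d) = ((k * (m - d + 1) : ℕ) : ℤ) := by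
      push_cast [Nat.cast_sub hdm]
      ring
    rw [← Nat.card_coe_set_eq, hC.2, max_eq_right hmk.le, min_eq_left hmk.le, he,
      Int.toNat_natCast]
    norm_cast
  · obtain ⟨M, rfl⟩ := hC
    have he : (k : ℤ) * (m + 1 - d) ≤ 0 :=
      mul_nonpos_of_nonneg_of_nonpos (by positivity) (by omega)
    simp [Int.toNat_of_nonpos he]

end cardinality

theorem multi_component_cardinality_general
    (q : ℕ) (F : Type) [Field F] [Fintype F] (hq : Fintype.card F = q)
    (k n d : ℕ) (hk : 0 < k) (hd : 0 < d)
    (hdk : d ≤ k) (h2k : 2 * k ≤ n)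
    (C : ∀ j : ℕ, Set (Matrix (Fin k) (Fin (n - k - j * d)) F))
    (hC : ∀ j ≤ (n - k) / d,
      if d ≤ n - j * d - k then IsMRD F (C j) d else ∃ M, C j = {M}) :
    (Nat.card {U : Submodule F (Fin n → F) | ∃ j ≤ (n - k) / d, ∃ M ∈ C j,
        U = rowSpace F (paddedLift F k n (j * d) M)} : ℤ)
      = (∑ i ∈ Finset.range ((n - 2 * k) / d + 1),
          (q : ℤ) ^ ((k - d + 1) * (n - k - d * i)))
        + ∑ i ∈ Finset.Icc ((n - 2 * k) / d + 1) ((n - k) / d),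
          ⌈(q : ℚ) ^ ((k : ℤ) * ((n : ℤ) - k + 1 - d * (i + 1)))⌉ := by
  subst hq
  have hjd : ∀ j ≤ (n - k) / d, j * d + k ≤ n := fun j hj => by
    have := (Nat.le_div_iff_mul_le hd).mp hj; omega
  have hcomp : ∀ j ≤ (n - k) / d,
      if d ≤ n - k - j * d then IsMRD F (C j) d else ∃ M, C j = {M} :=
    fun j hj => by simpa only [Nat.sub_right_comm n (j * d) k] using hC j hj
  have hsplit : (n - 2 * k) / d + 1 ≤ (n - k) / d + 1 :=
    Nat.add_le_add_right (Nat.div_le_div_right (by omega)) 1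
  rw [natCard_setOf_rowSpace_paddedLift hk (strictMono_mul_right_of_pos hd) hjd C,
    ← Finset.sum_range_add_sum_Ico _ hsplit, Finset.Ico_add_one_right_eq_Icc, Nat.cast_add]
  push_cast
  congr 1
  · refine Finset.sum_congr rfl fun i hi => ?_
    have hi : i * d ≤ n - 2 * k :=
      (Nat.le_div_iff_mul_le hd).mp (Finset.mem_range_succ_iff.mp hi)
    have hMRD := hcomp i ((Nat.le_div_iff_mul_le hd).mpr (by omega))
    rw [if_pos (by omega)] at hMRD
    rw [hMRD.ncard_eq_of_le (by omega), mul_comm d i]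
    norm_cast
  · refine Finset.sum_congr rfl fun i hi => ?_
    obtain ⟨hi, hiJ⟩ := Finset.mem_Icc.mp hi
    have hlt : n - 2 * k < i * d := (Nat.div_lt_iff_lt_mul hd).mp hi
    have hexp : (n : ℤ) - k + 1 - d * (i + 1) = ((n - k - i * d : ℕ) : ℤ) + 1 - d := by
      have := hjd i hiJ
      push_cast [Nat.cast_sub (by omega : i * d ≤ n - k), Nat.cast_sub (by omega : k ≤ n)]
      ring
    rw [cast_ncard_eq_ceil_of_lt (by omega) (hcomp i hiJ), hexp]

/-- **Cardinality of multi-component lifted MRD codes.**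
With `C_j` MRD (resp. a single matrix for the short components) as in the
multi-component construction, the union `𝒞 = ⋃_j 𝒞_j` has cardinality
`N = Σ_{i=0}^{⌊(n−2k)/d⌋} q^{(k−d+1)(n−k−di)}
   + Σ_{i=⌊(n−2k)/d⌋+1}^{⌊(n−k)/d⌋} ⌈q^{k(n−k+1−d(i+1))}⌉`,
where the ceiling of a nonpositive power of `q` equals `1`. -/
theorem multi_component_cardinality
    (q : ℕ) (F : Type) [Field F] [Fintype F] (hq : Fintype.card F = q)
    (k n d : ℕ) (hk : 0 < k) (hn : 0 < n) (hd : 0 < d)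
    (hdk : d ≤ k) (h2k : 2 * k ≤ n)
    (C : ∀ j : ℕ, Set (Matrix (Fin k) (Fin (n - k - j * d)) F))
    (hC : ∀ j ≤ (n - k) / d,
      if d ≤ n - j * d - k then IsMRD F (C j) d else ∃ M, C j = {M}) :
    (Nat.card {U : Submodule F (Fin n → F) | ∃ j ≤ (n - k) / d, ∃ M ∈ C j,
        U = rowSpace F (paddedLift F k n (j * d) M)} : ℤ)
      = (∑ i ∈ Finset.range ((n - 2 * k) / d + 1),
          (q : ℤ) ^ ((k - d + 1) * (n - k - d * i)))
        + ∑ i ∈ Finset.Icc ((n - 2 * k) / d + 1) ((n - k) / d),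
          ⌈(q : ℚ) ^ ((k : ℤ) * ((n : ℤ) - k + 1 - d * (i + 1)))⌉ :=
  multi_component_cardinality_general q F hq k n d hk hd hdk h2k C hC
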